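/- Let p, θ > 1 and r > 0. Define q by q + 1 = (θ+1)(r+1)/(p+1) (so q > 0), and set s = r + 1, a₁ = 4q√(pθ)/(q+1)², a₂ = 4r√(pθ)/(r+1)². Then a₁a₂ > 1 if and only if L(s) < 0. -/
import Mathlib


noncomputable section

/-- The quartic polynomial `L`. -/
def Lpoly (p θ s : ℝ) : ℝ :=
  s ^ 4 - (16 * p * θ * (p + 1) / (θ + 1)) * s ^ 2
    + (16 * p * θ * (p + 1) * (p + θ + 2) / (θ + 1) ^ 2) * s
    - 16 * p * θ * (p + 1) ^ 2 / (θ + 1) ^ 2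

/-- with `q + 1 = (θ+1)(r+1)/(p+1)`, `s = r + 1`,
`a₁ = 4q√(pθ)/(q+1)²`, `a₂ = 4r√(pθ)/(r+1)²`, one has `a₁a₂ > 1 ↔ L(s) < 0`. -/
theorem stmt14 (p θ r q : ℝ) (hp : 1 < p) (hθ : 1 < θ) (hr : 0 < r)
    (hq : q + 1 = (θ + 1) * (r + 1) / (p + 1)) :
    4 * q * Real.sqrt (p * θ) / (q + 1) ^ 2 *
        (4 * r * Real.sqrt (p * θ) / (r + 1) ^ 2) > 1 ↔
      Lpoly p θ (r + 1) < 0 := by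
  have hp0 : (0:ℝ) < p + 1 := by linarith
  have hθ0 : (0:ℝ) < θ + 1 := by linarith
  have hs0 : (0:ℝ) < r + 1 := by linarith
  have hq1 : 0 < q + 1 := by rw [hq]; positivity
  have hpθ : 0 < p * θ := by nlinarith
  have hS : Real.sqrt (p * θ) ^ 2 = p * θ := Real.sq_sqrt hpθ.le
  have hq' : q = (θ + 1) * (r + 1) / (p + 1) - 1 := by linarith
  have key : 4 * q * Real.sqrt (p * θ) / (q + 1) ^ 2 *
      (4 * r * Real.sqrt (p * θ) / (r + 1) ^ 2) =
      16 * p * θ * q * r / ((q + 1) ^ 2 * (r + 1) ^ 2) := by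
    rw [div_mul_div_comm, show 4 * q * Real.sqrt (p * θ) * (4 * r * Real.sqrt (p * θ))
      = 16 * q * r * Real.sqrt (p * θ) ^ 2 by ring, hS]
    ring
  rw [key]
  have hden : (0:ℝ) < (q + 1) ^ 2 * (r + 1) ^ 2 := by positivity
  rw [gt_iff_lt, lt_div_iff₀ hden, one_mul]
  have hid : (p + 1) ^ 2 * ((q + 1) ^ 2 * (r + 1) ^ 2 - 16 * p * θ * q * r)
      = (θ + 1) ^ 2 * Lpoly p θ (r + 1) := by
    subst hq'
    unfold Lpoly
    field_simp
    ring
  constructor <;> intro h <;>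
    nlinarith [hid, mul_pos hp0 hp0, mul_pos hθ0 hθ0, h]
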